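/- arXiv:1512.06593 — 5 statements merged into one kernel-verified Lean document; each statement's English description precedes it below -/
import Mathlib

section
/- If the closest-neighbor graph G_NB is connected, then, writing v_1 < v_2 < ⋯ < v_n for the increasing enumeration of V, one has f v_i = some v_{i+1} and g v_{i+1} = some v_i for every 1 ≤ i < n, and f v_n = none and g v_1 = none. In particular, G_NB is exactly the path v_1 − v_2 − ⋯ − v_n; i.e., each connected component of a bidirected closest-neighbor graph forms a line sorted by identifier. -/
private def nchain {V : Type*} (f : V → Option V) (m : V) : ℕ → Option V
  | 0 => some m
  | k+1 => (nchain f m k).bind f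

private lemma nchain_succ_some {V : Type*} (f : V → Option V) (m : V) {k : ℕ} {w : V}
    (h : nchain f m (k+1) = some w) : ∃ v, nchain f m k = some v ∧ f v = some w := by
  cases hk : nchain f m k with
  | none => simp [nchain, hk] at h
  | some v => exact ⟨v, rfl, by simpa [nchain, hk] using h⟩

private lemma nchain_none {V : Type*} (f : V → Option V) (m : V) {k l : ℕ}
    (hkl : k ≤ l) (h : nchain f m k = none) : nchain f m l = none := by
  induction l with
  | zero => exact (Nat.le_zero.mp hkl) ▸ h
  | succ l ih =>
    rcases Nat.lt_or_ge k (l+1) with h' | h'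
    · have := ih (Nat.lt_succ_iff.mp h')
      simp [nchain, this]
    · have : k = l + 1 := le_antisymm hkl h'
      exact this ▸ h

private lemma nchain_lt {V : Type*} [Preorder V] {f : V → Option V}
    (hf : ∀ x y, f x = some y → x < y) (m : V) :
    ∀ (d k : ℕ) {v w : V}, nchain f m k = some v → nchain f m (k+1+d) = some w → v < w := by
  intro d
  induction d with
  | zero =>
    intro k v w hv hw
    obtain ⟨u, hu, hfu⟩ := nchain_succ_some f m hw
    rw [hv] at hu
    exact hf _ _ (Option.some.inj hu ▸ hfu)
  | succ d ih =>
    intro k v w hv hw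
    obtain ⟨u, hu, hfu⟩ := nchain_succ_some f m hw
    exact lt_trans (ih k hv hu) (hf _ _ hfu)

/-- If the closest-neighbor graph `G_NB` is connected then, writing
`v_1 < v_2 < ⋯ < v_n` for the increasing enumeration of `V`, one has
`f v_i = some v_{i+1}` and `g v_{i+1} = some v_i` for every `1 ≤ i < n`, and
`f v_n = none` and `g v_1 = none`; in particular `G_NB` is exactly the path
`v_1 − v_2 − ⋯ − v_n`. -/
theorem closest_neighbor_graph_connected_is_sorted_line
    {V : Type*} [Fintype V] [LinearOrder V] [Nonempty V]
    (f g : V → Option V)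
    (hf : ∀ x y, f x = some y → x < y)
    (hg : ∀ x y, g x = some y → y < x)
    (hbi : ∀ x y, f x = some y ↔ g y = some x)
    (G : SimpleGraph V)
    (hG : ∀ x y, G.Adj x y ↔ x ≠ y ∧ (f x = some y ∨ f y = some x))
    (hconn : G.Connected) :
    ∀ (n : ℕ) (e : Fin n ≃o V),
      (∀ (i : Fin n) (h : i.val + 1 < n),
        f (e i) = some (e ⟨i.val + 1, h⟩) ∧ g (e ⟨i.val + 1, h⟩) = some (e i)) ∧
      (∀ i : Fin n, i.val + 1 = n → f (e i) = none) ∧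
      (∀ i : Fin n, i.val = 0 → g (e i) = none) ∧
      (∀ i j : Fin n, G.Adj (e i) (e j) ↔ (i.val + 1 = j.val ∨ j.val + 1 = i.val)) := by
  -- the global minimum
  set m : V := Finset.univ.min' Finset.univ_nonempty with hm
  have hmin : ∀ v : V, m ≤ v := fun v => Finset.min'_le _ v (Finset.mem_univ v)
  -- the chain reachable set
  set R : Set V := {v | ∃ k, nchain f m k = some v} with hR
  have hmR : m ∈ R := ⟨0, rfl⟩
  have hclosed : ∀ v w, v ∈ R → G.Adj v w → w ∈ R := by
    rintro v w ⟨k, hk⟩ hadj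
    rcases (hG v w).1 hadj with ⟨hne, h | h⟩
    · exact ⟨k+1, by simp [nchain, hk, h]⟩
    · have hgv : g v = some w := (hbi w v).1 h
      match k, hk with
      | 0, hk =>
        have hv : v = m := Option.some.inj hk.symm
        exact absurd (hmin w) (not_le.2 (hv ▸ hg v w hgv))
      | k+1, hk =>
        obtain ⟨u, hu, hfu⟩ := nchain_succ_some f m hk
        have hgu : g v = some u := (hbi u v).1 hfu
        have : w = u := Option.some.inj (hgv ▸ hgu)
        exact ⟨k, this ▸ hu⟩
  have hall : ∀ v, v ∈ R := by
    have hwalk : ∀ (u v : V) (_ : G.Walk u v), u ∈ R → v ∈ R := by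
      intro u v p
      induction p with
      | nil => exact id
      | cons h p ih => exact fun hu => ih (hclosed _ _ hu h)
    intro v
    obtain ⟨p⟩ := hconn.preconnected m v
    exact hwalk m v p hmR
  -- index comparison on the chain
  have hidx : ∀ {k l : ℕ} {v w : V}, nchain f m k = some v → nchain f m l = some w →
      v < w → k < l := by
    intro k l v w hk hl hvw
    by_contra h
    push_neg at h
    rcases eq_or_lt_of_le h with h | h
    · subst h
      rw [hl] at hk
      exact absurd (Option.some.inj hk) (ne_of_gt hvw)
    · have : w < v := by
        have := nchain_lt hf m (k - (l+1)) l hl (by convert hk using 2; omega)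
        exact this
      exact absurd hvw (not_lt.2 this.le)
  -- KEY: f maps each element to its successor
  have KEY : ∀ x y : V, x < y → (∀ z, x < z → y ≤ z) → f x = some y := by
    intro x y hxy hsucc
    obtain ⟨k, hk⟩ := hall x
    obtain ⟨l, hl⟩ := hall y
    have hkl : k < l := hidx hk hl hxy
    cases hfx : f x with
    | none =>
      have h1 : nchain f m (k+1) = none := by simp [nchain, hk, hfx]
      have h2 : nchain f m l = none := nchain_none f m hkl h1
      rw [hl] at h2; exact absurd h2 (by simp)
    | some w =>
      have hkw : nchain f m (k+1) = some w := by simp [nchain, hk, hfx]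
      have hxw : x < w := hf _ _ hfx
      rcases lt_or_eq_of_le (hsucc w hxw) with hyw | hyw
      · have : l < k + 1 := hidx hl hkw hyw
        omega
      · rw [← hyw]
  refine fun n e => ?_
  have hA : ∀ (i : Fin n) (h : i.val + 1 < n), f (e i) = some (e ⟨i.val + 1, h⟩) := by
    intro i h
    have hlt : e i < e ⟨i.val + 1, h⟩ := e.strictMono (by simp [Fin.lt_def])
    refine KEY _ _ hlt ?_
    intro z hz
    have hij : i < e.symm z := by
      rw [← e.lt_iff_lt]; simpa using hz
    have h2 : (⟨i.val + 1, h⟩ : Fin n) ≤ e.symm z := by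
      rw [Fin.le_def]; rw [Fin.lt_def] at hij; exact hij
    have h3 := e.le_iff_le.2 h2
    rwa [OrderIso.apply_symm_apply] at h3
  have hB : ∀ i : Fin n, i.val + 1 = n → f (e i) = none := by
    intro i h
    cases hfi : f (e i) with
    | none => rfl
    | some y =>
      have h1 : e i < y := hf _ _ hfi
      have h2 : i < e.symm y := by rw [← e.lt_iff_lt]; simpa using h1
      have := (e.symm y).isLt
      rw [Fin.lt_def] at h2; omega
  have hC : ∀ i : Fin n, i.val = 0 → g (e i) = none := by
    intro i h
    cases hgi : g (e i) with
    | none => rfl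
    | some y =>
      have h1 : y < e i := hg _ _ hgi
      have h2 : e.symm y < i := by rw [← e.lt_iff_lt]; simpa using h1
      rw [Fin.lt_def] at h2; omega
  refine ⟨fun i h => ⟨hA i h, (hbi _ _).1 (hA i h)⟩, hB, hC, ?_⟩
  intro i j
  constructor
  · intro hadj
    rcases (hG _ _).1 hadj with ⟨hne, h | h⟩
    · left
      rcases Nat.lt_or_ge (i.val + 1) n with h' | h'
      · have := hA i h'
        rw [this] at h
        have : (⟨i.val + 1, h'⟩ : Fin n) = j := e.injective (Option.some.inj h)
        rw [← this]
      · have : i.val + 1 = n := by omega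
        rw [hB i this] at h; exact absurd h (by simp)
    · right
      rcases Nat.lt_or_ge (j.val + 1) n with h' | h'
      · have := hA j h'
        rw [this] at h
        have : (⟨j.val + 1, h'⟩ : Fin n) = i := e.injective (Option.some.inj h)
        rw [← this]
      · have : j.val + 1 = n := by omega
        rw [hB j this] at h; exact absurd h (by simp)
  · rintro (h | h)
    · have h' : i.val + 1 < n := h ▸ j.isLt
      refine (hG _ _).2 ⟨?_, Or.inl ?_⟩
      · intro heq
        have hij : i = j := e.injective heq
        rw [hij] at h; omega
      · have hj : (⟨i.val + 1, h'⟩ : Fin n) = j := Fin.ext h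
        rw [← hj]; exact hA i h'
    · have h' : j.val + 1 < n := h ▸ i.isLt
      refine (hG _ _).2 ⟨?_, Or.inr ?_⟩
      · intro heq
        have hij : i = j := e.injective heq
        rw [hij] at h; omega
      · have hi : (⟨j.val + 1, h'⟩ : Fin n) = i := Fin.ext h
        rw [← hi]; exact hA j h'
end

section
/- Let G be a connected simple graph on a vertex type V and let u, v, w ∈ V with G.Adj u w and v ≠ w. Then the simple graph obtained from G by deleting the edge {u, v} and adding the edge {w, v} is still connected. (Delegating a reference: replacing the edge (u, v) by the path (u, w, v) through an existing neighbor w of u preserves weak connectivity of the network graph.) -/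
/-- If `G` is connected, `G.Adj u w` and `v ≠ w`, then deleting the edge
`{u, v}` and adding the edge `{w, v}` preserves connectivity (delegating a reference). -/
theorem delegation_preserves_connectivity
    {V : Type*} [Fintype V]
    (G : SimpleGraph V) (hconn : G.Connected)
    (u v w : V) (huw : G.Adj u w) (hvw : v ≠ w) :
    ((G.deleteEdges {s(u, v)}) ⊔ SimpleGraph.fromEdgeSet {s(w, v)}).Connected := by
  set H := (G.deleteEdges {s(u, v)}) ⊔ SimpleGraph.fromEdgeSet {s(w, v)} with hH
  have hwv : H.Adj w v := by
    rw [hH, SimpleGraph.sup_adj]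
    right
    exact ⟨rfl, fun h => hvw h.symm⟩
  have huwH : H.Adj u w := by
    rw [hH, SimpleGraph.sup_adj]
    left
    rw [SimpleGraph.deleteEdges_adj]
    refine ⟨huw, ?_⟩
    simp only [Set.mem_singleton_iff, Sym2.eq_iff]
    push_neg
    exact ⟨fun _ h => hvw h.symm, fun _ => huw.ne'⟩
  have key : ∀ x y : V, G.Adj x y → H.Reachable x y := by
    intro x y hxy
    by_cases h : s(x, y) = s(u, v)
    · rw [Sym2.eq_iff] at h
      rcases h with ⟨hx, hy⟩ | ⟨hx, hy⟩
      · subst hx; subst hy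
        exact (huwH.toWalk.append hwv.toWalk).reachable
      · subst hx; subst hy
        exact ((huwH.toWalk.append hwv.toWalk).reachable).symm
    · have : H.Adj x y := by
        rw [hH, SimpleGraph.sup_adj]
        left
        rw [SimpleGraph.deleteEdges_adj]
        exact ⟨hxy, by simpa using h⟩
      exact this.reachable
  haveI : Nonempty V := hconn.nonempty
  refine SimpleGraph.Connected.mk ?_
  intro x y
  obtain ⟨p⟩ := hconn x y
  induction p with
  | nil => rfl
  | cons h _ ih => exact (key _ _ h).trans ih
end

section
/- Let G be a connected simple graph on a finite vertex type V with at least two vertices, and let u ∈ V. Define a simple graph G' on the subtype {x : V // x ≠ u} by letting x and y (x ≠ y) be adjacent if and only if G.Adj x y, or both G.Adj u x and G.Adj u y. Then G' is connected. (A departing node that first introduces all of its neighbors pairwise to each other can exit the network without disconnecting the remaining present nodes.) -/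
/-- If `G` is connected on at least two vertices and a departing node `u`
first introduces all of its neighbors pairwise to each other, then the graph `G'` on the
remaining vertices (adjacency: old adjacency, or both being neighbors of `u`) is connected. -/
theorem exit_after_introductions_preserves_connectivity
    {V : Type*} [Fintype V] (hcard : 2 ≤ Fintype.card V)
    (G : SimpleGraph V) (hconn : G.Connected) (u : V)
    (G' : SimpleGraph {x : V // x ≠ u})
    (hG' : ∀ x y : {x : V // x ≠ u},
      G'.Adj x y ↔ x ≠ y ∧ (G.Adj ↑x ↑y ∨ (G.Adj u ↑x ∧ G.Adj u ↑y))) :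
    G'.Connected := by
  have key : ∀ n (x y : V) (hx : x ≠ u) (hy : y ≠ u) (p : G.Walk x y),
      p.length ≤ n → G'.Reachable ⟨x, hx⟩ ⟨y, hy⟩ := by
    intro n
    induction n with
    | zero =>
      intro x y hx hy p hp
      have := SimpleGraph.Walk.eq_of_length_eq_zero (Nat.le_zero.mp hp)
      subst this
      exact SimpleGraph.Reachable.refl _
    | succ n ih =>
      intro x y hx hy p hp
      cases p with
      | nil => exact SimpleGraph.Reachable.refl _
      | @cons _ b _ h q =>
        by_cases hb : b = u
        · cases q with
          | nil => exact absurd hb hy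
          | @cons _ c _ h' q' =>
            have h'' : G.Adj u c := hb ▸ h'
            have hu : G.Adj x u := hb ▸ h
            have hc : c ≠ u := (G.ne_of_adj h'').symm
            have hq' : q'.length ≤ n := by
              simp only [SimpleGraph.Walk.length_cons] at hp
              omega
            by_cases hxc : x = c
            · subst hxc
              exact ih x y hx hy q' hq'
            · have hadj : G'.Adj ⟨x, hx⟩ ⟨c, hc⟩ := by
                rw [hG']
                exact ⟨fun he => hxc (congrArg Subtype.val he),
                  Or.inr ⟨hu.symm, h''⟩⟩
              exact hadj.reachable.trans (ih c y hc hy q' hq')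
        · have hq : q.length ≤ n := by
            simp only [SimpleGraph.Walk.length_cons] at hp
            omega
          by_cases hxb : x = b
          · subst hxb
            exact ih x y hx hy q hq
          · have hadj : G'.Adj ⟨x, hx⟩ ⟨b, hb⟩ := by
              rw [hG']
              exact ⟨fun he => hxb (congrArg Subtype.val he), Or.inl h⟩
            exact hadj.reachable.trans (ih b y hb hy q hq)
  obtain ⟨v, hv⟩ := Fintype.exists_ne_of_one_lt_card (by omega) u
  have : Nonempty {x : V // x ≠ u} := ⟨⟨v, hv⟩⟩
  refine SimpleGraph.Connected.mk fun x y => ?_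
  obtain ⟨p⟩ := hconn.preconnected x.1 y.1
  exact key p.length x.1 y.1 x.2 y.2 p le_rfl
end

section
/- Suppose w < y, the edge (w, y) belongs to E, and there exists u with u ≠ y, w < u, E w u, and y ∈ R_E(u). Let E' be the directed graph obtained from E by removing the edge (w, y). Then R_{E'}(v) = R_E(v) for every v ∈ V. (A safe delegation step — deleting an explicit edge (w, y) only after w has been introduced to a neighbor u from which y remains reachable — does not shrink the increasing-reachability set of any node.) -/
/-- `incReach E v` is `R_E(v)`: the set of nodes reachable from `v` by a nonempty path of
edges of `E` with strictly increasing identifiers. -/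
def incReach {V : Type*} [LinearOrder V] (E : V → V → Prop) (v : V) : Set V :=
  {x | Relation.TransGen (fun a b => E a b ∧ a < b) v x}

/-- `removeEdge E w y` is the directed graph obtained from `E` by removing the edge `(w, y)`. -/
def removeEdge {V : Type*} (E : V → V → Prop) (w y : V) : V → V → Prop :=
  fun a b => E a b ∧ ¬(a = w ∧ b = y)

private lemma incReach_lt {V : Type*} [LinearOrder V] {E : V → V → Prop} {a b : V}
    (h : Relation.TransGen (fun a b => E a b ∧ a < b) a b) : a < b := by
  induction h with
  | single h => exact h.2
  | tail _ h ih => exact lt_trans ih h.2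

private lemma path_avoids {V : Type*} [LinearOrder V] {E : V → V → Prop} {w y a b : V}
    (hw : w < a) (h : Relation.TransGen (fun a b => E a b ∧ a < b) a b) :
    Relation.TransGen (fun a b => removeEdge E w y a b ∧ a < b) a b := by
  induction h with
  | single h =>
      exact Relation.TransGen.single ⟨⟨h.1, fun hc => absurd hc.1 (ne_of_gt hw)⟩, h.2⟩
  | tail hp h ih =>
      exact ih.tail ⟨⟨h.1, fun hc => absurd hc.1 (ne_of_gt (lt_trans hw (incReach_lt hp)))⟩, h.2⟩

/-- A safe delegation step—deleting an explicit edge `(w, y)` only after `w`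
has been introduced to a neighbor `u ≠ y` with `w < u`, `E w u`, and `y ∈ R_E(u)`—does not
shrink the increasing-reachability set of any node. -/
theorem incReach_removeEdge_of_safe_delegation
    {V : Type*} [Fintype V] [LinearOrder V]
    (E : V → V → Prop) (w y : V) (hwy : w < y) (hEwy : E w y)
    (u : V) (huy : u ≠ y) (hwu : w < u) (hEwu : E w u) (hy : y ∈ incReach E u) :
    ∀ v : V, incReach (removeEdge E w y) v = incReach E v := by
  have hwu' : Relation.TransGen (fun a b => removeEdge E w y a b ∧ a < b) w u :=
    Relation.TransGen.single ⟨⟨hEwu, fun hc => huy hc.2⟩, hwu⟩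
  have hwy' : Relation.TransGen (fun a b => removeEdge E w y a b ∧ a < b) w y :=
    hwu'.trans (path_avoids hwu hy)
  intro v
  ext x
  constructor
  · intro h
    refine Relation.TransGen.mono ?_ v x h
    intro a b hab
    exact ⟨hab.1.1, hab.2⟩
  · intro h
    induction h with
    | single h =>
        rename_i b
        by_cases hc : v = w ∧ b = y
        · obtain ⟨rfl, rfl⟩ := hc; exact hwy'
        · exact Relation.TransGen.single ⟨⟨h.1, hc⟩, h.2⟩
    | tail _ h ih =>
        rename_i b c _
        by_cases hc : b = w ∧ c = y
        · obtain ⟨rfl, rfl⟩ := hc; exact ih.trans hwy'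
        · exact ih.tail ⟨⟨h.1, hc⟩, h.2⟩
end

section
/- Let E_0, E_1, …, E_m be directed graphs on V such that for each i < m, E_{i+1} arises from E_i either (a) by adding a single edge, or (b) by removing a single edge (w, y) with w < y for which there exists u with u ≠ y, w < u, E_i w u, and y ∈ R_{E_i}(u). Then R_{E_i}(v) ⊆ R_{E_j}(v) for every v ∈ V and all 0 ≤ i ≤ j ≤ m. In particular, once a node is reachable from v along explicit edges of increasing identifier, it remains reachable throughout the computation; this is the key monotonicity property underlying monotonic searchability. -/
private lemma incReach_mono_of_sub {V : Type*} [LinearOrder V] {E E' : V → V → Prop}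
    (h : ∀ x y, E x y → E' x y) (v : V) : incReach E v ⊆ incReach E' v := by
  intro x hx
  exact Relation.TransGen.mono (r := fun a b => E a b ∧ a < b) (p := fun a b => E' a b ∧ a < b) (fun a b hab => ⟨h a b hab.1, hab.2⟩) _ _ hx

/-- increasing paths from `u` stay above `u` and survive the removal of an edge whose
source is below `u`. -/
private lemma path_above {V : Type*} [LinearOrder V] {E E' : V → V → Prop} {w y u : V}
    (hE' : ∀ x z, E' x z ↔ E x z ∧ ¬(x = w ∧ z = y)) (hwu : w < u) :
    ∀ b, Relation.TransGen (fun a b => E a b ∧ a < b) u b →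
      Relation.TransGen (fun a b => E' a b ∧ a < b) u b ∧ u ≤ b := by
  intro b hb
  induction hb with
  | single h =>
      rename_i c
      refine ⟨Relation.TransGen.single ⟨?_, h.2⟩, h.2.le⟩
      rw [hE']; exact ⟨h.1, fun hc => absurd hc.1 (ne_of_gt hwu)⟩
  | tail _ h ih =>
      rename_i b c _
      refine ⟨ih.1.tail ⟨?_, h.2⟩, le_trans ih.2 h.2.le⟩
      rw [hE']
      exact ⟨h.1, fun hc => absurd (hc.1 ▸ ih.2) (not_le.mpr hwu)⟩

private lemma removal_step {V : Type*} [LinearOrder V] {E E' : V → V → Prop} {w y u : V}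
    (huy : u ≠ y) (hwu : w < u) (hEwu : E w u) (hy : y ∈ incReach E u)
    (hE' : ∀ x z, E' x z ↔ E x z ∧ ¬(x = w ∧ z = y)) (v : V) :
    incReach E v ⊆ incReach E' v := by
  have detour : Relation.TransGen (fun a b => E' a b ∧ a < b) w y := by
    refine Relation.TransGen.head ⟨?_, hwu⟩ (path_above hE' hwu y hy).1
    rw [hE']; exact ⟨hEwu, fun hc => absurd hc.2 huy⟩
  have step : ∀ a b : V, E a b ∧ a < b → Relation.TransGen (fun a b => E' a b ∧ a < b) a b := by
    intro a b hab
    by_cases hc : a = w ∧ b = y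
    · exact hc.1 ▸ hc.2 ▸ detour
    · exact Relation.TransGen.single ⟨(hE' a b).mpr ⟨hab.1, hc⟩, hab.2⟩
  intro x hx
  induction hx with
  | single h => exact step _ _ h
  | tail _ h ih => exact ih.trans (step _ _ h)

/-- Along a computation `E_0, E_1, …, E_m` in which each step either (a) adds
a single edge, or (b) removes a single edge `(w, y)` with `w < y` for which there exists
`u ≠ y` with `w < u`, `E_i w u` and `y ∈ R_{E_i}(u)`, the increasing-reachability sets grow
monotonically: `R_{E_i}(v) ⊆ R_{E_j}(v)` for all `v` and all `i ≤ j ≤ m`. -/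
theorem incReach_monotone_along_computation
    {V : Type*} [Fintype V] [LinearOrder V]
    (m : ℕ) (E : ℕ → V → V → Prop)
    (hstep : ∀ i < m,
      (∃ a b : V, ∀ x y : V, E (i + 1) x y ↔ E i x y ∨ (x = a ∧ y = b)) ∨
      (∃ w y : V, w < y ∧ E i w y ∧
        (∃ u : V, u ≠ y ∧ w < u ∧ E i w u ∧ y ∈ incReach (E i) u) ∧
        (∀ x z : V, E (i + 1) x z ↔ E i x z ∧ ¬(x = w ∧ z = y)))) :
    ∀ (v : V) (i j : ℕ), i ≤ j → j ≤ m → incReach (E i) v ⊆ incReach (E j) v := by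
  have one : ∀ i < m, ∀ v, incReach (E i) v ⊆ incReach (E (i + 1)) v := by
    intro i him v
    rcases hstep i him with ⟨a, b, h⟩ | ⟨w, y, _, _, ⟨u, huy, hwu, hEwu, hy⟩, hE'⟩
    · exact incReach_mono_of_sub (fun x z hx => (h x z).mpr (Or.inl hx)) v
    · exact removal_step huy hwu hEwu hy hE' v
  intro v i j hij hjm
  induction j with
  | zero => have : i = 0 := Nat.le_zero.mp hij; subst this; exact subset_rfl
  | succ j ih =>
      rcases Nat.lt_or_ge i (j + 1) with h | h
      · exact (ih (by omega) (by omega)).trans (one j (by omega) v)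
      · have : i = j + 1 := le_antisymm hij h
        subst this; exact subset_rfl
end
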